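/- (Theorem 1, unbiasedness of the convex combination estimator.) Assume π₊ ≠ π₋ and let γ ∈ [0,1]. Define the Sconf empirical risk R̂_Sconf(D) = (1/(2n))·Σ_{i=1}^{n} [ (π₋ − sᵢ)·(ℓ₊(xᵢ) + ℓ₊(xᵢ'))/(π₋ − π₊) + (π₊ − sᵢ)·(ℓ₋(xᵢ) + ℓ₋(xᵢ'))/(π₊ − π₋) ] and the ConfDiff empirical risk R̂_CD(D) = (1/(2n))·Σ_{i=1}^{n} [ (π₊ − cᵢ)·ℓ₊(xᵢ) + (π₋ − cᵢ)·ℓ₋(xᵢ') + (π₊ + cᵢ)·ℓ₊(xᵢ') + (π₋ + cᵢ)·ℓ₋(xᵢ) ], where sᵢ = s(xᵢ,xᵢ') and cᵢ = c(xᵢ,xᵢ'). Then ∫ (γ·R̂_Sconf + (1−γ)·R̂_CD) dν = R; i.e., the convex combination γ·R̂_Sconf + (1−γ)·R̂_CD is an unbiased estimator of the classification risk. -/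

import Mathlib

/-!
Each summand of `γ R̂_Sconf + (1 - γ) R̂_CD` has the form `L(x, η x') + L(x', η x)` with
`L(x, t) = w₊(η x, t) ℓ₊(x) + w₋(η x, t) ℓ₋(x)`, where both weights are affine in `t`.
Hence integrating out `x'` just replaces `η x'` by its mean `π₊`, and there the weights reduce to
`w₊(a, π₊) = a` and `w₋(a, π₊) = 1 - a`: each pair contributes `2R` in expectation, and the
normalisation `1 / (2n)` over `n` i.i.d. pairs gives `R`.
-/

open MeasureTheory

section Integration

variable {α β E : Type*} [MeasurableSpace α] [MeasurableSpace β]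
  [NormedAddCommGroup E] [NormedSpace ℝ E]

theorem integral_sum_eval_pi {ι : Type*} [Fintype ι] (κ : Measure α) [IsProbabilityMeasure κ]
    {f : α → E} (hf : Integrable f κ) :
    ∫ D, ∑ i, f (D i) ∂Measure.pi (fun _ : ι => κ) = Fintype.card ι • ∫ x, f x ∂κ := by
  have hD : ∀ i, MeasurePreserving (fun D : ι → α => D i) _ κ :=
    measurePreserving_eval (fun _ : ι => κ)
  have h_eval (i : ι) : ∫ D, f (D i) ∂Measure.pi (fun _ : ι => κ) = ∫ x, f x ∂κ := by
    rw [← integral_map (hD i).measurable.aemeasurable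
      (by rw [(hD i).map_eq]; exact hf.aestronglyMeasurable), (hD i).map_eq]
  rw [integral_finsetSum]
  · simp [h_eval]
  · exact fun i _ => (hD i).integrable_comp_of_integrable hf

theorem integral_add_swap (μ : Measure α) [SFinite μ] {f : α → α → E}
    (hf : Integrable (fun z => f z.1 z.2) (μ.prod μ)) :
    ∫ z, (f z.1 z.2 + f z.2 z.1) ∂μ.prod μ = 2 • ∫ z, f z.1 z.2 ∂μ.prod μ := by
  rw [integral_add hf (hf.swap : Integrable (fun z => f z.2 z.1) _), two_nsmul]
  congr 1
  exact integral_prod_swap (fun z => f z.1 z.2)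

theorem integral_comp_of_affine (ν : Measure β) [IsProbabilityMeasure ν] {η : β → ℝ}
    (hη : Integrable η ν) {g : ℝ → ℝ} (hg : ∀ t, g t = g 0 + (g 1 - g 0) * t) :
    ∫ y, g (η y) ∂ν = g (∫ y, η y ∂ν) := by
  rw [hg (∫ y, η y ∂ν)]
  simp_rw [hg (η _)]
  rw [integral_add (integrable_const _) (hη.const_mul _), integral_const_mul]
  simp

theorem integral_prod_comp_snd_of_affine (μ : Measure α) [SFinite μ] (ν : Measure β)
    [IsProbabilityMeasure ν] {η : β → ℝ} (hη : Integrable η ν) {L : α → ℝ → ℝ}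
    (hL : ∀ x t, L x t = L x 0 + (L x 1 - L x 0) * t)
    (hint : Integrable (fun z => L z.1 (η z.2)) (μ.prod ν)) :
    ∫ z, L z.1 (η z.2) ∂μ.prod ν = ∫ x, L x (∫ y, η y ∂ν) ∂μ := by
  rw [integral_prod _ hint]
  exact integral_congr_ae (ae_of_all _ fun x => integral_comp_of_affine ν hη (hL x))

theorem integrable_of_mem_Icc (μ : Measure α) [IsFiniteMeasure μ] {f : α → ℝ}
    (hf : Measurable f) {a b : ℝ} (hab : ∀ x, f x ∈ Set.Icc a b) : Integrable f μ :=
  .of_bound hf.aestronglyMeasurable (max |a| |b|)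
    (ae_of_all _ fun x => abs_le_max_abs_abs (hab x).1 (hab x).2)

theorem integrable_prod_weight_mul (μ ν : Measure α) [SFinite μ] [IsFiniteMeasure ν]
    {η ℓ : α → ℝ} (hη : Measurable η) (hη01 : ∀ x, η x ∈ Set.Icc 0 1) (hℓ : Integrable ℓ μ)
    {w : ℝ → ℝ → ℝ} (hw : Continuous (Function.uncurry w)) :
    Integrable (fun z : α × α => w (η z.1) (η z.2) * ℓ z.1) (μ.prod ν) := by
  obtain ⟨C, hC⟩ :=
    (isCompact_Icc.prod isCompact_Icc).exists_bound_of_continuousOn hw.continuousOn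
  refine (hℓ.comp_fst ν).bdd_mul ?_
    (ae_of_all _ fun z => hC (η z.1, η z.2) ⟨hη01 z.1, hη01 z.2⟩)
  exact (hw.measurable.comp
    ((hη.comp measurable_fst).prodMk (hη.comp measurable_snd))).aestronglyMeasurable

end Integration

section PairLoss

variable {X : Type*} [MeasurableSpace X]

/-- The contribution of `x` to the summand of a pair `(x, x')`, as a function of `t = η x'`. -/
def pairLoss (wp wm : ℝ → ℝ → ℝ) (η ℓp ℓm : X → ℝ) (x : X) (t : ℝ) : ℝ :=
  wp (η x) t * ℓp x + wm (η x) t * ℓm x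

variable (μ : Measure X) [IsProbabilityMeasure μ] {η ℓp ℓm : X → ℝ} {wp wm : ℝ → ℝ → ℝ}

theorem integrable_pairLoss (hη : Measurable η) (hη01 : ∀ x, η x ∈ Set.Icc 0 1)
    (hℓp : Integrable ℓp μ) (hℓm : Integrable ℓm μ) (hwp : Continuous (Function.uncurry wp))
    (hwm : Continuous (Function.uncurry wm)) :
    Integrable (fun z : X × X => pairLoss wp wm η ℓp ℓm z.1 (η z.2)) (μ.prod μ) :=
  (integrable_prod_weight_mul μ μ hη hη01 hℓp hwp).add
    (integrable_prod_weight_mul μ μ hη hη01 hℓm hwm)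

theorem integral_pairLoss_add_swap (hη : Integrable η μ)
    (hint : Integrable (fun z : X × X => pairLoss wp wm η ℓp ℓm z.1 (η z.2)) (μ.prod μ))
    (hwp_affine : ∀ a b, wp a b = wp a 0 + (wp a 1 - wp a 0) * b)
    (hwm_affine : ∀ a b, wm a b = wm a 0 + (wm a 1 - wm a 0) * b)
    {π : ℝ} (hπ : ∫ x, η x ∂μ = π) (hwp_mean : ∀ a, wp a π = a) (hwm_mean : ∀ a, wm a π = 1 - a) :
    ∫ z, (pairLoss wp wm η ℓp ℓm z.1 (η z.2) + pairLoss wp wm η ℓp ℓm z.2 (η z.1)) ∂μ.prod μ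
      = 2 * ∫ x, (η x * ℓp x + (1 - η x) * ℓm x) ∂μ := by
  have h_affine x t : pairLoss wp wm η ℓp ℓm x t = pairLoss wp wm η ℓp ℓm x 0
      + (pairLoss wp wm η ℓp ℓm x 1 - pairLoss wp wm η ℓp ℓm x 0) * t := by
    simp only [pairLoss]
    rw [hwp_affine _ t, hwm_affine _ t]
    ring
  rw [integral_add_swap μ (f := fun x x' => pairLoss wp wm η ℓp ℓm x (η x')) hint,
    integral_prod_comp_snd_of_affine μ μ hη h_affine hint, hπ, two_nsmul, two_mul]
  simp only [pairLoss, hwp_mean, hwm_mean]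

end PairLoss

section ConvexWeight

/- The weights of `ℓ₊(x)` and `ℓ₋(x)` in the summand of `γ R̂_Sconf + (1 - γ) R̂_CD` for the pair
`(x, x')`, with `π = π₊`, `a = η x` and `b = η x'`. -/
noncomputable def convexWeightPos (γ π a b : ℝ) : ℝ :=
  γ * ((1 - π - (a * b + (1 - a) * (1 - b))) / (1 - π - π)) + (1 - γ) * (π - (b - a))

noncomputable def convexWeightNeg (γ π a b : ℝ) : ℝ :=
  γ * ((π - (a * b + (1 - a) * (1 - b))) / (π - (1 - π))) + (1 - γ) * (1 - π + (b - a))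

variable (γ π : ℝ)

theorem continuous_convexWeightPos : Continuous (Function.uncurry (convexWeightPos γ π)) := by
  unfold convexWeightPos
  fun_prop

theorem continuous_convexWeightNeg : Continuous (Function.uncurry (convexWeightNeg γ π)) := by
  unfold convexWeightNeg
  fun_prop

theorem convexWeightPos_affine (a b : ℝ) : convexWeightPos γ π a b
    = convexWeightPos γ π a 0 + (convexWeightPos γ π a 1 - convexWeightPos γ π a 0) * b := by
  unfold convexWeightPos
  ring

theorem convexWeightNeg_affine (a b : ℝ) : convexWeightNeg γ π a b
    = convexWeightNeg γ π a 0 + (convexWeightNeg γ π a 1 - convexWeightNeg γ π a 0) * b := by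
  unfold convexWeightNeg
  ring

variable {π}

theorem convexWeightPos_self (hπ : π ≠ 1 - π) (a : ℝ) : convexWeightPos γ π a π = a := by
  have : 1 - π - π ≠ 0 := sub_ne_zero.2 hπ.symm
  unfold convexWeightPos
  field_simp
  ring

theorem convexWeightNeg_self (hπ : π ≠ 1 - π) (a : ℝ) : convexWeightNeg γ π a π = 1 - a := by
  have : π - (1 - π) ≠ 0 := sub_ne_zero.2 hπ
  unfold convexWeightNeg
  field_simp
  ring

end ConvexWeight

theorem sconfconfdiff_convex_combination_unbiased_general
    {X : Type*} [MeasurableSpace X] (μ : Measure X) [IsProbabilityMeasure μ]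
    (η : X → ℝ) (hη : Measurable η) (hη0 : ∀ x, 0 ≤ η x) (hη1 : ∀ x, η x ≤ 1)
    (πp πm : ℝ) (hπp : πp = ∫ x, η x ∂μ) (hπm : πm = 1 - πp) (hne : πp ≠ πm)
    (s c : X → X → ℝ)
    (hs : ∀ x x', s x x' = η x * η x' + (1 - η x) * (1 - η x'))
    (hc : ∀ x x', c x x' = η x' - η x)
    (Cℓ : ℝ)
    (ℓp ℓm : X → ℝ) (hℓp : Measurable ℓp) (hℓm : Measurable ℓm)
    (hℓp0 : ∀ x, 0 ≤ ℓp x) (hℓpC : ∀ x, ℓp x ≤ Cℓ)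
    (hℓm0 : ∀ x, 0 ≤ ℓm x) (hℓmC : ∀ x, ℓm x ≤ Cℓ)
    (R : ℝ) (hR : R = ∫ x, (η x * ℓp x + (1 - η x) * ℓm x) ∂μ)
    (n : ℕ) (hn : 1 ≤ n)
    (ν : Measure (Fin n → X × X)) (hν : ν = Measure.pi fun _ => μ.prod μ)
    (γ : ℝ)
    (RSconf RCD : (Fin n → X × X) → ℝ)
    (hRSconf : ∀ D, RSconf D = (1 / (2 * (n : ℝ))) * ∑ i,
      ((πm - s (D i).1 (D i).2) * (ℓp (D i).1 + ℓp (D i).2) / (πm - πp)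
        + (πp - s (D i).1 (D i).2) * (ℓm (D i).1 + ℓm (D i).2) / (πp - πm)))
    (hRCD : ∀ D, RCD D = (1 / (2 * (n : ℝ))) * ∑ i,
      ((πp - c (D i).1 (D i).2) * ℓp (D i).1 + (πm - c (D i).1 (D i).2) * ℓm (D i).2
        + (πp + c (D i).1 (D i).2) * ℓp (D i).2 + (πm + c (D i).1 (D i).2) * ℓm (D i).1)) :
    ∫ D, (γ * RSconf D + (1 - γ) * RCD D) ∂ν = R := by
  subst hν hπm
  set L := pairLoss (convexWeightPos γ πp) (convexWeightNeg γ πp) η ℓp ℓm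
  have h_sample D : γ * RSconf D + (1 - γ) * RCD D
      = 1 / (2 * (n : ℝ)) * ∑ i, (L (D i).1 (η (D i).2) + L (D i).2 (η (D i).1)) := by
    simp only [hRSconf, hRCD, hs, hc, L, pairLoss, convexWeightPos, convexWeightNeg,
      Finset.mul_sum, ← Finset.sum_add_distrib]
    exact Finset.sum_congr rfl fun i _ => by ring
  have hη01 x : η x ∈ Set.Icc 0 1 := ⟨hη0 x, hη1 x⟩
  have hL_int : Integrable (fun z : X × X => L z.1 (η z.2)) (μ.prod μ) :=
    integrable_pairLoss μ hη hη01 (integrable_of_mem_Icc μ hℓp fun x => ⟨hℓp0 x, hℓpC x⟩)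
      (integrable_of_mem_Icc μ hℓm fun x => ⟨hℓm0 x, hℓmC x⟩)
      (continuous_convexWeightPos γ πp) (continuous_convexWeightNeg γ πp)
  have h_pair : Integrable (fun z : X × X => L z.1 (η z.2) + L z.2 (η z.1)) (μ.prod μ) :=
    hL_int.add hL_int.swap
  have hn' : (n : ℝ) ≠ 0 := Nat.cast_ne_zero.2 (Nat.one_le_iff_ne_zero.1 hn)
  simp_rw [h_sample]
  rw [integral_const_mul, integral_sum_eval_pi _ h_pair, Fintype.card_fin, nsmul_eq_mul,
    integral_pairLoss_add_swap μ (integrable_of_mem_Icc μ hη hη01) hL_int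
      (convexWeightPos_affine γ πp) (convexWeightNeg_affine γ πp) hπp.symm
      (convexWeightPos_self γ hne) (convexWeightNeg_self γ hne), ← hR]
  field_simp

/-- (Theorem 1, unbiasedness of the convex combination estimator.) -/
theorem sconfconfdiff_convex_combination_unbiased
    {X : Type*} [MeasurableSpace X] (μ : Measure X) [IsProbabilityMeasure μ]
    (η : X → ℝ) (hη : Measurable η) (hη0 : ∀ x, 0 ≤ η x) (hη1 : ∀ x, η x ≤ 1)
    (πp πm : ℝ) (hπp : πp = ∫ x, η x ∂μ) (hπm : πm = 1 - πp) (hne : πp ≠ πm)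
    (s c : X → X → ℝ)
    (hs : ∀ x x', s x x' = η x * η x' + (1 - η x) * (1 - η x'))
    (hc : ∀ x x', c x x' = η x' - η x)
    (Cℓ : ℝ) (hCℓ : 0 ≤ Cℓ)
    (ℓp ℓm : X → ℝ) (hℓp : Measurable ℓp) (hℓm : Measurable ℓm)
    (hℓp0 : ∀ x, 0 ≤ ℓp x) (hℓpC : ∀ x, ℓp x ≤ Cℓ)
    (hℓm0 : ∀ x, 0 ≤ ℓm x) (hℓmC : ∀ x, ℓm x ≤ Cℓ)
    (R : ℝ) (hR : R = ∫ x, (η x * ℓp x + (1 - η x) * ℓm x) ∂μ)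
    (n : ℕ) (hn : 1 ≤ n)
    (ν : Measure (Fin n → X × X)) (hν : ν = Measure.pi fun _ => μ.prod μ)
    (γ : ℝ) (hγ : γ ∈ Set.Icc (0 : ℝ) 1)
    (RSconf RCD : (Fin n → X × X) → ℝ)
    (hRSconf : ∀ D, RSconf D = (1 / (2 * (n : ℝ))) * ∑ i,
      ((πm - s (D i).1 (D i).2) * (ℓp (D i).1 + ℓp (D i).2) / (πm - πp)
        + (πp - s (D i).1 (D i).2) * (ℓm (D i).1 + ℓm (D i).2) / (πp - πm)))
    (hRCD : ∀ D, RCD D = (1 / (2 * (n : ℝ))) * ∑ i,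
      ((πp - c (D i).1 (D i).2) * ℓp (D i).1 + (πm - c (D i).1 (D i).2) * ℓm (D i).2
        + (πp + c (D i).1 (D i).2) * ℓp (D i).2 + (πm + c (D i).1 (D i).2) * ℓm (D i).1)) :
    ∫ D, (γ * RSconf D + (1 - γ) * RCD D) ∂ν = R :=
  sconfconfdiff_convex_combination_unbiased_general μ η hη hη0 hη1 πp πm hπp hπm hne s c hs hc Cℓ ℓp
    ℓm hℓp hℓm hℓp0 hℓpC hℓm0 hℓmC R hR n hn ν hν γ RSconf RCD hRSconf hRCD
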